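/- arXiv:2205.11453 — 2 statements merged into one kernel-verified Lean document; each statement's English description precedes it below -/
import Mathlib

section
/- Let 0 ≤ s ≤ 1/2 and define Ψ_s(n₁,n₂,n₃,n₄) = ⟨n₁⟩^{2s} - ⟨n₂⟩^{2s} + ⟨n₃⟩^{2s} - ⟨n₄⟩^{2s} for integers n₁,n₂,n₃,n₄. If n₄ = n₁ - n₂ + n₃, then there is a constant C independent of the nⱼ such that |Ψ_s(n₁,n₂,n₃,n₄)| ≤ C min(⟨n₁-n₂⟩^{2s}, ⟨n₁-n₄⟩^{2s}) ≤ C ⟨n₁-n₂⟩^{s} ⟨n₁-n₄⟩^{s}. -/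
/-- The Japanese bracket `⟨x⟩ = (1+x²)^{1/2}`. -/
noncomputable def jb (x : ℝ) : ℝ := Real.sqrt (1 + x ^ 2)

/-- The symbol of `2s` symmetrized derivatives
`Ψ_s(n₁,n₂,n₃,n₄) = ⟨n₁⟩^{2s} - ⟨n₂⟩^{2s} + ⟨n₃⟩^{2s} - ⟨n₄⟩^{2s}`. -/
noncomputable def Psi (s : ℝ) (n₁ n₂ n₃ n₄ : ℤ) : ℝ :=
  jb n₁ ^ (2 * s) - jb n₂ ^ (2 * s) + jb n₃ ^ (2 * s) - jb n₄ ^ (2 * s)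

/-!
Each of the two pairings `(⟨n₁⟩^{2s} - ⟨n₂⟩^{2s}) + (⟨n₃⟩^{2s} - ⟨n₄⟩^{2s})` and
`(⟨n₁⟩^{2s} - ⟨n₄⟩^{2s}) + (⟨n₃⟩^{2s} - ⟨n₂⟩^{2s})` of `Ψ_s` is bounded termwise by
`|⟨a⟩^{2s} - ⟨b⟩^{2s}| ≤ ⟨a - b⟩^{2s}`, and the relation `n₄ = n₁ - n₂ + n₃` makes the two
differences in each pairing equal up to sign. This gives `|Ψ_s| ≤ 2 min(⟨n₁-n₂⟩^{2s}, ⟨n₁-n₄⟩^{2s})`,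
and the minimum of two squares is at most their geometric mean.
The inequality for the bracket follows from its triangle inequality `⟨a + b⟩ ≤ ⟨a⟩ + ⟨b⟩`
and the subadditivity of `x ↦ x^t` for `0 ≤ t ≤ 1`.
-/

lemma jb_nonneg (x : ℝ) : 0 ≤ jb x := Real.sqrt_nonneg _

lemma jb_sq (x : ℝ) : jb x ^ 2 = 1 + x ^ 2 := Real.sq_sqrt (by positivity)

lemma abs_le_jb (x : ℝ) : |x| ≤ jb x := Real.abs_le_sqrt (by linarith)

lemma jb_neg (x : ℝ) : jb (-x) = jb x := by simp only [jb, even_two, Even.neg_pow]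

lemma jb_sub_comm (a b : ℝ) : jb (a - b) = jb (b - a) := by rw [← neg_sub, jb_neg]

lemma jb_add_le (a b : ℝ) : jb (a + b) ≤ jb a + jb b := by
  have hab : a * b ≤ jb a * jb b := calc
    a * b ≤ |a| * |b| := by rw [← abs_mul]; exact le_abs_self _
    _ ≤ jb a * jb b := mul_le_mul (abs_le_jb a) (abs_le_jb b) (abs_nonneg b) (jb_nonneg a)
  rw [jb, Real.sqrt_le_iff]
  exact ⟨add_nonneg (jb_nonneg a) (jb_nonneg b), by nlinarith [jb_sq a, jb_sq b]⟩

lemma jb_rpow_sub_le {t : ℝ} (ht : 0 ≤ t) (ht1 : t ≤ 1) (a b : ℝ) :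
    jb a ^ t - jb b ^ t ≤ jb (a - b) ^ t := by
  have h := calc
    jb a ^ t = jb (b + (a - b)) ^ t := by rw [add_sub_cancel]
    _ ≤ (jb b + jb (a - b)) ^ t := Real.rpow_le_rpow (jb_nonneg _) (jb_add_le b (a - b)) ht
    _ ≤ jb b ^ t + jb (a - b) ^ t :=
      Real.rpow_add_le_add_rpow (jb_nonneg b) (jb_nonneg (a - b)) ht ht1
  linarith

lemma abs_jb_rpow_sub_le {t : ℝ} (ht : 0 ≤ t) (ht1 : t ≤ 1) (a b : ℝ) :
    |jb a ^ t - jb b ^ t| ≤ jb (a - b) ^ t := by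
  rw [abs_sub_le_iff]
  exact ⟨jb_rpow_sub_le ht ht1 a b, jb_sub_comm a b ▸ jb_rpow_sub_le ht ht1 b a⟩

lemma abs_sub_add_sub_le_two_mul_min {f g : ℝ → ℝ} (hfg : ∀ a b, |f a - f b| ≤ g (a - b))
    (hg : ∀ x, g (-x) = g x) {n₁ n₂ n₃ n₄ : ℝ} (h : n₄ = n₁ - n₂ + n₃) :
    |f n₁ - f n₂ + f n₃ - f n₄| ≤ 2 * min (g (n₁ - n₂)) (g (n₁ - n₄)) := by
  have pairing : ∀ m₁ m₂ m₃ m₄, m₃ - m₄ = -(m₁ - m₂) →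
      |f m₁ - f m₂ + (f m₃ - f m₄)| ≤ 2 * g (m₁ - m₂) := by
    intro m₁ m₂ m₃ m₄ hm
    have h₃₄ := hfg m₃ m₄
    rw [hm, hg] at h₃₄
    linarith [abs_add_le (f m₁ - f m₂) (f m₃ - f m₄), hfg m₁ m₂]
  have pair₁₂ := pairing n₁ n₂ n₃ n₄ (by rw [h]; ring)
  have pair₁₄ := pairing n₁ n₄ n₃ n₂ (by rw [h]; ring)
  rw [show f n₁ - f n₂ + f n₃ - f n₄ = f n₁ - f n₂ + (f n₃ - f n₄) by ring]
  rw [show f n₁ - f n₄ + (f n₃ - f n₂) = f n₁ - f n₂ + (f n₃ - f n₄) by ring] at pair₁₄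
  rw [mul_min_of_nonneg _ _ zero_le_two]
  exact le_min pair₁₂ pair₁₄

lemma min_sq_le_mul {u v : ℝ} (hu : 0 ≤ u) (hv : 0 ≤ v) : min (u ^ 2) (v ^ 2) ≤ u * v := by
  rcases le_total u v with huv | hvu
  · exact (min_le_left _ _).trans (by nlinarith)
  · exact (min_le_right _ _).trans (by nlinarith)

lemma min_rpow_two_mul_le {x y s : ℝ} (hx : 0 ≤ x) (hy : 0 ≤ y) :
    min (x ^ (2 * s)) (y ^ (2 * s)) ≤ x ^ s * y ^ s := by
  rw [mul_comm 2 s, ← Nat.cast_ofNat, Real.rpow_mul_natCast hx, Real.rpow_mul_natCast hy]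
  exact min_sq_le_mul (Real.rpow_nonneg hx s) (Real.rpow_nonneg hy s)

/-- For `0 ≤ s ≤ 1/2` and integers with `n₄ = n₁ - n₂ + n₃`, there is `C` independent of the `nⱼ`
with `|Ψ_s(n̄)| ≤ C min(⟨n₁-n₂⟩^{2s}, ⟨n₁-n₄⟩^{2s}) ≤ C ⟨n₁-n₂⟩^s ⟨n₁-n₄⟩^s`. -/
theorem psi_bound (s : ℝ) (hs0 : 0 ≤ s) (hs : s ≤ 1/2) :
    ∃ C > 0, ∀ n₁ n₂ n₃ n₄ : ℤ, n₄ = n₁ - n₂ + n₃ →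
      |Psi s n₁ n₂ n₃ n₄| ≤
        C * min (jb ((n₁ - n₂ : ℤ)) ^ (2 * s)) (jb ((n₁ - n₄ : ℤ)) ^ (2 * s)) ∧
      C * min (jb ((n₁ - n₂ : ℤ)) ^ (2 * s)) (jb ((n₁ - n₄ : ℤ)) ^ (2 * s)) ≤
        C * (jb ((n₁ - n₂ : ℤ)) ^ s * jb ((n₁ - n₄ : ℤ)) ^ s) := by
  refine ⟨2, two_pos, fun n₁ n₂ n₃ n₄ h => ⟨?_, ?_⟩⟩
  · have hreal : (n₄ : ℝ) = n₁ - n₂ + n₃ := by exact_mod_cast h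
    push_cast
    exact abs_sub_add_sub_le_two_mul_min (f := fun x => jb x ^ (2 * s))
      (g := fun x => jb x ^ (2 * s)) (abs_jb_rpow_sub_le (by linarith) (by linarith))
      (fun x => by rw [jb_neg]) hreal
  · exact mul_le_mul_of_nonneg_left (min_rpow_two_mul_le (jb_nonneg _) (jb_nonneg _)) zero_le_two
end

section
/- Let 1/4 < s ≤ 1/2 and 0 < γ < 1/(1-2s). Then there exist constants C_γ = C_γ(s) > 0, κ = κ(γ,s) > 0 and δ > 0 such that for all V₀ ∈ H^s(𝕋), Y ∈ H^{s-1/2-δ}(𝕋) and Z ∈ ℝ: |∫_𝕋 |V₀|² dx + 2 Re ∫_𝕋 V̄₀ Y dx + Z|^γ ≥ (1/2)‖V₀‖_{L²}^{2γ} − (1/10)‖V₀‖_{H^s}² − C_γ ‖Y‖_{H^{s-1/2-δ}}^κ − C_γ |Z|^γ. -/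
set_option maxHeartbeats 1000000

lemma jb_pos (x : ℝ) : 0 < jb x := Real.sqrt_pos.mpr (by positivity)

lemma one_le_jb (x : ℝ) : 1 ≤ jb x := by
  have h := Real.sqrt_le_sqrt (show (1:ℝ) ≤ 1 + x ^ 2 by nlinarith [sq_nonneg x])
  simpa [jb] using h

/-- Cancellation for iterated rpow. -/
lemma rpow_rpow_cancel {t : ℝ} (ht : 0 ≤ t) {u : ℝ} (hu : u ≠ 0) :
    (t ^ u) ^ (1/u) = t := by
  rw [← Real.rpow_mul ht, mul_one_div_cancel hu, Real.rpow_one]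

lemma rpow_two_eq_sq {t : ℝ} : t ^ (2:ℝ) = t ^ 2 := by
  rw [show (2:ℝ) = ((2:ℕ):ℝ) by norm_num, Real.rpow_natCast]

lemma sq_rpow_half {x : ℝ} (hx : 0 ≤ x) : (x ^ ((1:ℝ)/2)) ^ 2 = x := by
  rw [sq, ← Real.rpow_add_of_nonneg hx (by norm_num) (by norm_num)]
  norm_num

/-- The key analytic bound: `A ≤ E` and the interpolation/Cauchy–Schwarz bound on the
cross term. -/
lemma key_analytic (s δ θ : ℝ) (hs0 : 0 < s) (hσ0 : 0 < 1/2 + δ - s)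
    (hσs : 1/2 + δ - s < s) (hθdef : θ = (1/2 + δ - s)/s) (v y : ℤ → ℂ)
    (hv : Summable fun n : ℤ => jb n ^ (2*s) * ‖v n‖ ^ 2)
    (hy : Summable fun n : ℤ => jb n ^ (2*(s - 1/2 - δ)) * ‖y n‖ ^ 2) :
    (∑' n : ℤ, ‖v n‖ ^ 2) ≤ (∑' n : ℤ, jb n ^ (2*s) * ‖v n‖ ^ 2) ∧
    2 * |(∑' n : ℤ, (starRingEnd ℂ) (v n) * y n).re| ≤
      2 * ((((∑' n : ℤ, ‖v n‖ ^ 2) ^ (1-θ)) *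
            ((∑' n : ℤ, jb n ^ (2*s) * ‖v n‖ ^ 2) ^ θ)) ^ ((1:ℝ)/2)
        * (∑' n : ℤ, jb n ^ (2*(s - 1/2 - δ)) * ‖y n‖ ^ 2) ^ ((1:ℝ)/2)) := by
  set σ : ℝ := 1/2 + δ - s with hσdef
  have hθ0 : 0 < θ := by rw [hθdef]; exact div_pos hσ0 hs0
  have hθ1 : θ < 1 := by rw [hθdef]; exact (div_lt_one hs0).mpr hσs
  have hsθ : s * θ = σ := by rw [hθdef]; field_simp
  set A : ℝ := ∑' n : ℤ, ‖v n‖ ^ 2 with hAdef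
  set E : ℝ := ∑' n : ℤ, jb n ^ (2*s) * ‖v n‖ ^ 2 with hEdef
  set NY : ℝ := ∑' n : ℤ, jb n ^ (2*(s - 1/2 - δ)) * ‖y n‖ ^ 2 with hNYdef
  have hA0 : 0 ≤ A := tsum_nonneg (fun n => by positivity)
  have hE0 : 0 ≤ E :=
    tsum_nonneg (fun n => mul_nonneg (Real.rpow_nonneg (jb_pos _).le _) (by positivity))
  have hNY0 : 0 ≤ NY :=
    tsum_nonneg (fun n => mul_nonneg (Real.rpow_nonneg (jb_pos _).le _) (by positivity))
  have hterm : ∀ n : ℤ, ‖v n‖ ^ 2 ≤ jb n ^ (2*s) * ‖v n‖ ^ 2 := by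
    intro n
    have h1 : (1:ℝ) ≤ jb n ^ (2*s) := by
      have h2 := Real.rpow_le_rpow_of_exponent_le (one_le_jb (n:ℝ))
        (by linarith : (0:ℝ) ≤ 2*s)
      simpa using h2
    exact le_mul_of_one_le_left (by positivity) h1
  have hA_sum : Summable (fun n : ℤ => ‖v n‖ ^ 2) :=
    hv.of_nonneg_of_le (fun n => by positivity) hterm
  have hAE : A ≤ E := Summable.tsum_le_tsum hterm hA_sum hv
  -- interpolation
  have hpq1 : Real.HolderConjugate (1/(1-θ)) (1/θ) :=
    Real.holderConjugate_one_div (by linarith) hθ0 (by ring)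
  have h1θ : (1:ℝ) - θ ≠ 0 := by linarith
  have hfeq : ∀ n : ℤ, (((‖v n‖^2 : ℝ) ^ (1-θ)) ^ (1/(1-θ))) = ‖v n‖^2 :=
    fun n => rpow_rpow_cancel (by positivity) h1θ
  have hgeq : ∀ n : ℤ,
      (((jb n ^ (2*s) * ‖v n‖^2 : ℝ) ^ θ) ^ (1/θ)) = jb n ^ (2*s) * ‖v n‖^2 :=
    fun n => rpow_rpow_cancel
      (mul_nonneg (Real.rpow_nonneg (jb_pos _).le _) (by positivity)) hθ0.ne'
  have hinterp := Real.summable_and_inner_le_Lp_mul_Lq_tsum_of_nonneg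
      (f := fun n : ℤ => (‖v n‖^2 : ℝ) ^ (1-θ))
      (g := fun n : ℤ => (jb n ^ (2*s) * ‖v n‖^2 : ℝ) ^ θ) hpq1
      (fun n => Real.rpow_nonneg (by positivity) _)
      (fun n => Real.rpow_nonneg
        (mul_nonneg (Real.rpow_nonneg (jb_pos _).le _) (by positivity)) _)
      (hA_sum.congr (fun n => (hfeq n).symm))
      (hv.congr (fun n => (hgeq n).symm))
  have hfg1 : ∀ n : ℤ, ((‖v n‖^2 : ℝ) ^ (1-θ)) * ((jb n ^ (2*s) * ‖v n‖^2 : ℝ) ^ θ)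
      = jb n ^ (2*σ) * ‖v n‖^2 := by
    intro n
    have hx : (0:ℝ) ≤ ‖v n‖^2 := by positivity
    have h1 : ((jb (n:ℝ) ^ (2*s) : ℝ)) ^ θ = jb n ^ ((2*s)*θ) :=
      (Real.rpow_mul (jb_pos _).le _ _).symm
    have h1' : jb (n:ℝ) ^ ((2*s)*θ) = jb n ^ (2*σ) := by
      rw [show (2*s)*θ = 2*(s*θ) by ring, hsθ]
    have h2 : (‖v n‖^2 : ℝ)^(1-θ) * (‖v n‖^2 : ℝ)^θ = ‖v n‖^2 := by
      rw [← Real.rpow_add_of_nonneg hx (by linarith) hθ0.le]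
      norm_num
    rw [Real.mul_rpow (Real.rpow_nonneg (jb_pos _).le _) hx, h1, h1']
    calc (‖v n‖^2 : ℝ)^(1-θ) * (jb (n:ℝ) ^ (2*σ) * (‖v n‖^2 : ℝ)^θ)
        = jb (n:ℝ) ^ (2*σ) * ((‖v n‖^2 : ℝ)^(1-θ) * (‖v n‖^2 : ℝ)^θ) := by ring
      _ = jb (n:ℝ) ^ (2*σ) * ‖v n‖^2 := by rw [h2]
  have hP_sum : Summable (fun n : ℤ => jb n ^ (2*σ) * ‖v n‖^2) :=
    hinterp.1.congr hfg1
  have hP0 : 0 ≤ ∑' n : ℤ, jb n ^ (2*σ) * ‖v n‖^2 :=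
    tsum_nonneg (fun n => mul_nonneg (Real.rpow_nonneg (jb_pos _).le _) (by positivity))
  have hP_le : (∑' n : ℤ, jb n ^ (2*σ) * ‖v n‖^2) ≤ A ^ (1-θ) * E ^ θ := by
    calc (∑' n : ℤ, jb n ^ (2*σ) * ‖v n‖^2)
        = ∑' n : ℤ, ((‖v n‖^2 : ℝ) ^ (1-θ)) * ((jb n ^ (2*s) * ‖v n‖^2 : ℝ) ^ θ) :=
          (tsum_congr hfg1).symm
      _ ≤ (∑' n : ℤ, (((‖v n‖^2 : ℝ) ^ (1-θ)) ^ (1/(1-θ)))) ^ (1/(1/(1-θ)))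
          * (∑' n : ℤ, (((jb n ^ (2*s) * ‖v n‖^2 : ℝ) ^ θ) ^ (1/θ))) ^ (1/(1/θ)) :=
          hinterp.2
      _ = A ^ (1-θ) * E ^ θ := by
          rw [tsum_congr hfeq, tsum_congr hgeq, one_div_one_div, one_div_one_div,
            hAdef, hEdef]
  -- Cauchy–Schwarz
  have hpq2 : Real.HolderConjugate 2 2 := ⟨by norm_num, by norm_num, by norm_num⟩
  have hf2 : ∀ n : ℤ, ((jb n ^ σ * ‖v n‖ : ℝ)) ^ (2:ℝ) = jb n ^ (2*σ) * ‖v n‖^2 := by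
    intro n
    rw [Real.mul_rpow (Real.rpow_nonneg (jb_pos _).le _) (norm_nonneg _),
      ← Real.rpow_mul (jb_pos (n:ℝ)).le, rpow_two_eq_sq, show σ*2 = 2*σ by ring]
  have hg2 : ∀ n : ℤ,
      ((jb n ^ (-σ) * ‖y n‖ : ℝ)) ^ (2:ℝ) = jb n ^ (2*(s - 1/2 - δ)) * ‖y n‖^2 := by
    intro n
    rw [Real.mul_rpow (Real.rpow_nonneg (jb_pos _).le _) (norm_nonneg _),
      ← Real.rpow_mul (jb_pos (n:ℝ)).le, rpow_two_eq_sq,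
      show (-σ)*2 = 2*(s - 1/2 - δ) by rw [hσdef]; ring]
  have hCS := Real.summable_and_inner_le_Lp_mul_Lq_tsum_of_nonneg
      (f := fun n : ℤ => jb n ^ σ * ‖v n‖)
      (g := fun n : ℤ => jb n ^ (-σ) * ‖y n‖) hpq2
      (fun n => mul_nonneg (Real.rpow_nonneg (jb_pos _).le _) (norm_nonneg _))
      (fun n => mul_nonneg (Real.rpow_nonneg (jb_pos _).le _) (norm_nonneg _))
      (hP_sum.congr (fun n => (hf2 n).symm))
      (hy.congr (fun n => (hg2 n).symm))
  have hfg2 : ∀ n : ℤ, (jb n ^ σ * ‖v n‖) * (jb n ^ (-σ) * ‖y n‖) = ‖v n‖ * ‖y n‖ := by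
    intro n
    have h1 : jb (n:ℝ) ^ σ * jb (n:ℝ) ^ (-σ) = 1 := by
      rw [← Real.rpow_add (jb_pos (n:ℝ))]; simp
    calc (jb (n:ℝ) ^ σ * ‖v n‖) * (jb (n:ℝ) ^ (-σ) * ‖y n‖)
        = (jb (n:ℝ) ^ σ * jb (n:ℝ) ^ (-σ)) * (‖v n‖ * ‖y n‖) := by ring
      _ = ‖v n‖ * ‖y n‖ := by rw [h1, one_mul]
  have hS_sum : Summable (fun n : ℤ => ‖v n‖ * ‖y n‖) := hCS.1.congr hfg2
  have hS_le : (∑' n : ℤ, ‖v n‖ * ‖y n‖)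
      ≤ (∑' n : ℤ, jb n ^ (2*σ) * ‖v n‖^2) ^ ((1:ℝ)/2) * NY ^ ((1:ℝ)/2) := by
    calc (∑' n : ℤ, ‖v n‖ * ‖y n‖)
        = ∑' n : ℤ, (jb n ^ σ * ‖v n‖) * (jb n ^ (-σ) * ‖y n‖) := (tsum_congr hfg2).symm
      _ ≤ (∑' n : ℤ, ((jb n ^ σ * ‖v n‖ : ℝ)) ^ (2:ℝ)) ^ ((1:ℝ)/2)
          * (∑' n : ℤ, ((jb n ^ (-σ) * ‖y n‖ : ℝ)) ^ (2:ℝ)) ^ ((1:ℝ)/2) := hCS.2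
      _ = (∑' n : ℤ, jb n ^ (2*σ) * ‖v n‖^2) ^ ((1:ℝ)/2) * NY ^ ((1:ℝ)/2) := by
          rw [tsum_congr hf2, tsum_congr hg2, hNYdef]
  have hR : |(∑' n : ℤ, (starRingEnd ℂ) (v n) * y n).re| ≤ ∑' n : ℤ, ‖v n‖ * ‖y n‖ := by
    have h1 : Summable (fun n : ℤ => ‖(starRingEnd ℂ) (v n) * y n‖) :=
      hS_sum.congr (fun n => by simp [norm_mul])
    calc |(∑' n : ℤ, (starRingEnd ℂ) (v n) * y n).re|
        ≤ ‖∑' n : ℤ, (starRingEnd ℂ) (v n) * y n‖ := by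
          exact Complex.abs_re_le_norm _
      _ ≤ ∑' n : ℤ, ‖(starRingEnd ℂ) (v n) * y n‖ := norm_tsum_le_tsum_norm h1
      _ = ∑' n : ℤ, ‖v n‖ * ‖y n‖ := tsum_congr (fun n => by simp [norm_mul])
  refine ⟨hAE, ?_⟩
  have h2 : (∑' n : ℤ, jb n ^ (2*σ) * ‖v n‖^2) ^ ((1:ℝ)/2)
      ≤ (A^(1-θ) * E^θ) ^ ((1:ℝ)/2) := Real.rpow_le_rpow hP0 hP_le (by norm_num)
  have h3 : |(∑' n : ℤ, (starRingEnd ℂ) (v n) * y n).re|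
      ≤ (A^(1-θ) * E^θ) ^ ((1:ℝ)/2) * NY ^ ((1:ℝ)/2) :=
    (hR.trans hS_le).trans (mul_le_mul_of_nonneg_right h2 (Real.rpow_nonneg hNY0 _))
  linarith

/-- Main real-variable combination lemma for `γ ≥ 1`. -/
lemma combine_ge_one (γ θ : ℝ) (hγ : 1 ≤ γ) (hθ0 : 0 < θ) (hθ1 : θ < 1)
    (hw : θ * (γ - 1) < 1) (k : ℕ) (hk : γ ≤ (1 + θ - γ*θ) * k)
    (hk' : γ = (1 + θ - γ*θ) * k ∨ 1 < γ) :
    ∃ C > 0, ∀ A E ν R Z : ℝ, 0 ≤ A → A ≤ E → 0 ≤ ν →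
      2*|R| ≤ 2*((A^(1-θ) * E^θ) ^ ((1:ℝ)/2) * ν ^ ((1:ℝ)/2)) →
      (1/2) * A^γ ≤ |A + 2*R + Z|^γ + (1/10)*E + C * ν^k + C * |Z|^γ := by
  have hγ0 : (0:ℝ) < γ := by linarith
  set W : ℝ := 1 + θ - γ*θ with hWdef
  have hW0 : 0 < W := by rw [hWdef]; linarith
  have h12 : (0:ℝ) < (1/2:ℝ)^(1/γ) := Real.rpow_pos_of_pos (by norm_num) _
  have hlt1 : ((1:ℝ)/2:ℝ)^(1/γ) < 1 :=
    Real.rpow_lt_one (by norm_num) (by norm_num) (by positivity)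
  set η : ℝ := 1 - (1/2:ℝ)^(1/γ) with hηdef
  have hη0 : 0 < η := by rw [hηdef]; linarith
  have hη1 : η < 1 := by rw [hηdef]; linarith
  have hηγ : (1-η)^γ = 1/2 := by
    rw [hηdef, show (1:ℝ) - (1 - (1/2:ℝ)^(1/γ)) = (1/2:ℝ)^(1/γ) by ring,
      ← Real.rpow_mul (by norm_num), one_div_mul_cancel hγ0.ne', Real.rpow_one]
  set c₆ : ℝ := (4/η)^2 with hc₆def
  have hc₆ : 0 < c₆ := by rw [hc₆def]; positivity
  have hθp : (0:ℝ) < 1 + θ := by linarith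
  set μ : ℝ := θ*γ/(1+θ) with hμdef
  set ρ : ℝ := γ/(1+θ) with hρdef
  have hμ0 : 0 < μ := by rw [hμdef]; positivity
  have hμ1 : μ < 1 := by rw [hμdef, div_lt_one hθp]; linarith
  have hρ0 : 0 < ρ := by rw [hρdef]; positivity
  set cstar : ℝ := (1/2) * c₆^ρ with hcstardef
  have hcstar : 0 < cstar := by
    rw [hcstardef]; have := Real.rpow_pos_of_pos hc₆ ρ; linarith
  set CA : ℝ := (cstar*(10:ℝ)^μ)^(1/(1-μ)) with hCAdef
  have hCA : 0 < CA := by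
    rw [hCAdef]
    exact Real.rpow_pos_of_pos (mul_pos hcstar (Real.rpow_pos_of_pos (by norm_num) _)) _
  set FIVEθ : ℝ := (5:ℝ)^θ with hFdef
  have hF : 0 < FIVEθ := Real.rpow_pos_of_pos (by norm_num) _
  set c₇ : ℝ := (c₆*FIVEθ)⁻¹ with hc₇def
  have hc₇ : 0 < c₇ := by rw [hc₇def]; positivity
  set β : ℝ := W*(k:ℝ) - γ with hβdef
  have hβ0 : 0 ≤ β := by rw [hβdef]; linarith [hk]
  set c₁₂ : ℝ := max 1 ((5:ℝ)^(β/(γ-1))) with hc₁₂def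
  have hc₁₂ : 1 ≤ c₁₂ := le_max_left _ _
  have hc₇k : 0 < c₇^k := pow_pos hc₇ k
  set CB : ℝ := (1/2)*c₁₂ / c₇^k with hCBdef
  have hCB : 0 < CB := by rw [hCBdef]; positivity
  set CZ : ℝ := (1/2)*(2/η)^γ with hCZdef
  have hCZ : 0 < CZ := by
    rw [hCZdef]; have := Real.rpow_pos_of_pos (show (0:ℝ) < 2/η by positivity) γ; linarith
  clear_value W η c₆ μ ρ cstar CA FIVEθ c₇ β c₁₂ CB CZ
  refine ⟨CZ + CA + CB + 1, by linarith, ?_⟩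
  intro A E ν R Z hA0 hAE hν0 hRD
  set C : ℝ := CZ + CA + CB + 1 with hCdef
  clear_value C
  have hC : 0 < C := by rw [hCdef]; linarith
  have hE0 : 0 ≤ E := hA0.trans hAE
  have hX0 : 0 ≤ |A + 2*R + Z|^γ := Real.rpow_nonneg (abs_nonneg _) _
  have hνk0 : 0 ≤ ν^k := pow_nonneg hν0 k
  have hZγ0 : 0 ≤ |Z|^γ := Real.rpow_nonneg (abs_nonneg _) _
  have hCν : 0 ≤ C * ν^k := mul_nonneg hC.le hνk0
  have hCZ' : 0 ≤ C * |Z|^γ := mul_nonneg hC.le hZγ0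
  by_cases hAz : A = 0
  · subst hAz
    rw [Real.zero_rpow hγ0.ne']
    linarith [hX0, hE0, hCν, hCZ']
  have hApos : 0 < A := lt_of_le_of_ne hA0 (Ne.symm hAz)
  have hAγpos : 0 < A^γ := Real.rpow_pos_of_pos hApos _
  by_cases hcase1 : 2*|R| + |Z| ≤ η*A
  · -- the main term dominates
    have h2 : |2*R + Z| ≤ 2*|R| + |Z| := by
      calc |2*R + Z| ≤ |2*R| + |Z| := abs_add_le _ _
        _ = 2*|R| + |Z| := by rw [abs_mul]; norm_num
    have h3 : A ≤ |A + 2*R + Z| + |2*R + Z| := by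
      have h4 : A ≤ |A| := le_abs_self A
      have h5 : |A| = |(A + 2*R + Z) + (-(2*R + Z))| := by congr 1; ring
      have h6 : |(A + 2*R + Z) + (-(2*R + Z))| ≤ |A + 2*R + Z| + |-(2*R + Z)| :=
        abs_add_le _ _
      rw [abs_neg] at h6
      linarith
    have h1 : (1-η)*A ≤ |A + 2*R + Z| := by linarith
    have h4 : ((1-η)*A)^γ ≤ |A + 2*R + Z|^γ :=
      Real.rpow_le_rpow (mul_nonneg (by linarith) hA0) h1 hγ0.le
    rw [Real.mul_rpow (by linarith) hA0, hηγ] at h4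
    linarith
  push_neg at hcase1
  by_cases hcase2 : η*A/2 < |Z|
  · -- the Z term dominates
    have h1 : A ≤ (2/η)*|Z| := by
      rw [div_mul_eq_mul_div, le_div_iff₀ hη0]; linarith
    have h2 : A^γ ≤ ((2/η)*|Z|)^γ := Real.rpow_le_rpow hA0 h1 hγ0.le
    rw [Real.mul_rpow (by positivity) (abs_nonneg _)] at h2
    have h3 : (1/2)*A^γ ≤ CZ*|Z|^γ := by rw [hCZdef]; linarith
    have h4 : CZ*|Z|^γ ≤ C*|Z|^γ := by
      apply mul_le_mul_of_nonneg_right _ hZγ0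
      rw [hCdef]; linarith
    linarith
  · push_neg at hcase2
    have hcase3 : η*A/2 < 2*|R| := by linarith
    have hD : η*A/2 < 2*((A^(1-θ) * E^θ) ^ ((1:ℝ)/2) * ν ^ ((1:ℝ)/2)) :=
      lt_of_lt_of_le hcase3 hRD
    have hU0 : 0 ≤ A^(1-θ)*E^θ :=
      mul_nonneg (Real.rpow_nonneg hA0 _) (Real.rpow_nonneg hE0 _)
    -- derive A^{1+θ} ≤ c₆ E^θ ν
    have hA2 : A^((1:ℝ)+θ) ≤ c₆ * (E^θ * ν) := by
      have h1 : η*A ≤ 4*((A^(1-θ) * E^θ) ^ ((1:ℝ)/2) * ν ^ ((1:ℝ)/2)) := by linarith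
      have hsq : (η*A)^2 ≤ (4*((A^(1-θ) * E^θ) ^ ((1:ℝ)/2) * ν ^ ((1:ℝ)/2)))^2 :=
        pow_le_pow_left₀ (by positivity) h1 2
      have e2 : A^(2:ℕ) = A^((1:ℝ)-θ) * A^((1:ℝ)+θ) := by
        rw [← Real.rpow_add hApos, show (1:ℝ)-θ+(1+θ) = (2:ℝ) by ring, rpow_two_eq_sq]
      have e3 : (4*((A^(1-θ) * E^θ) ^ ((1:ℝ)/2) * ν ^ ((1:ℝ)/2)))^2
          = 16*(A^((1:ℝ)-θ) * (E^θ*ν)) := by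
        rw [mul_pow, mul_pow, sq_rpow_half hU0, sq_rpow_half hν0]
        ring
      rw [e3] at hsq
      have e1 : (η*A)^2 = η^2 * (A^((1:ℝ)-θ) * A^((1:ℝ)+θ)) := by
        rw [← e2]; ring
      rw [e1] at hsq
      have hc : 0 < A^((1:ℝ)-θ) := Real.rpow_pos_of_pos hApos _
      have hsq' : A^((1:ℝ)-θ) * (η^2 * A^((1:ℝ)+θ))
          ≤ A^((1:ℝ)-θ) * (16*(E^θ*ν)) := by linarith [hsq]
      have h5 : η^2 * A^((1:ℝ)+θ) ≤ 16*(E^θ*ν) := le_of_mul_le_mul_left hsq' hc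
      have h6 : c₆ * η^2 = 16 := by rw [hc₆def]; field_simp; norm_num
      have h7 : η^2*(c₆*(E^θ*ν)) = 16*(E^θ*ν) := by rw [← h6]; ring
      have h8 : η^2*A^((1:ℝ)+θ) ≤ η^2*(c₆*(E^θ*ν)) := by rw [h7]; exact h5
      exact le_of_mul_le_mul_left h8 (by positivity)
    by_cases hν1 : (1:ℝ) ≤ ν
    · -- large ν : exact Young with exponent k ≥ e
      have h4 : A^γ = (A^((1:ℝ)+θ))^ρ := by
        rw [← Real.rpow_mul hA0, show ((1:ℝ)+θ)*ρ = γ by rw [hρdef]; field_simp]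
      have h5 : (A^((1:ℝ)+θ))^ρ ≤ (c₆*(E^θ*ν))^ρ :=
        Real.rpow_le_rpow (Real.rpow_nonneg hA0 _) hA2 hρ0.le
      have h6 : (c₆*(E^θ*ν))^ρ = c₆^ρ*(E^μ*ν^ρ) := by
        rw [Real.mul_rpow hc₆.le (mul_nonneg (Real.rpow_nonneg hE0 _) hν0),
          Real.mul_rpow (Real.rpow_nonneg hE0 _) hν0, ← Real.rpow_mul hE0,
          show θ*ρ = μ by rw [hρdef, hμdef]; field_simp]
      have h7 : ν^ρ ≤ (ν^k : ℝ)^(1-μ) := by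
        have h8 : ρ ≤ (k:ℝ)*(1-μ) := by
          have e : (k:ℝ)*(1-μ) - ρ = (W*(k:ℝ) - γ)/(1+θ) := by
            rw [hμdef, hρdef, hWdef]; field_simp
          have : 0 ≤ (W*(k:ℝ) - γ)/(1+θ) := div_nonneg (by linarith [hk]) hθp.le
          linarith
        calc ν^ρ ≤ ν^((k:ℝ)*(1-μ)) := Real.rpow_le_rpow_of_exponent_le hν1 h8
          _ = (ν^k : ℝ)^(1-μ) := by
              rw [Real.rpow_mul hν0, Real.rpow_natCast]
      have h9 : A^γ ≤ c₆^ρ*(E^μ*(ν^k : ℝ)^(1-μ)) := by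
        have := h4 ▸ (h5.trans_eq h6)
        have h10 : c₆^ρ*(E^μ*ν^ρ) ≤ c₆^ρ*(E^μ*(ν^k : ℝ)^(1-μ)) := by
          apply mul_le_mul_of_nonneg_left _ (Real.rpow_nonneg hc₆.le _)
          exact mul_le_mul_of_nonneg_left h7 (Real.rpow_nonneg hE0 _)
        linarith
      -- Young's inequality
      have hpq : ((1:ℝ)/μ).HolderConjugate (1/(1-μ)) :=
        Real.holderConjugate_one_div hμ0 (by linarith) (by ring)
      have hyoung := Real.young_inequality_of_nonneg
        (a := (E/10)^μ) (b := cstar*(10:ℝ)^μ*((ν^k : ℝ)^(1-μ)))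
        (Real.rpow_nonneg (by positivity) _)
        (by positivity) hpq
      have hb1 : ((E/10)^μ)^((1:ℝ)/μ) = E/10 := rpow_rpow_cancel (by positivity) hμ0.ne'
      have hb2 : (cstar*(10:ℝ)^μ*((ν^k : ℝ)^(1-μ)))^((1:ℝ)/(1-μ)) = CA * ν^k := by
        rw [Real.mul_rpow (by positivity) (Real.rpow_nonneg hνk0 _),
          rpow_rpow_cancel hνk0 (by linarith), hCAdef]
      rw [hb1, hb2] at hyoung
      have hstep : (E/10)^μ * (cstar*(10:ℝ)^μ*((ν^k : ℝ)^(1-μ)))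
          = cstar * (E^μ*(ν^k : ℝ)^(1-μ)) := by
        rw [Real.div_rpow hE0 (by norm_num)]
        have h10 : ((10:ℝ)^μ) ≠ 0 := (Real.rpow_pos_of_pos (by norm_num) _).ne'
        field_simp
      rw [hstep] at hyoung
      have hp1 : (1:ℝ) ≤ 1/μ := by rw [le_div_iff₀ hμ0]; linarith
      have hq1 : (1:ℝ) ≤ 1/(1-μ) := by rw [le_div_iff₀ (by linarith)]; linarith
      have hEd : 0 ≤ E/10 := by linarith
      have hfin : (1/2)*A^γ ≤ E/10 + CA*ν^k := by
        have h11 : (1/2)*A^γ ≤ cstar*(E^μ*(ν^k : ℝ)^(1-μ)) := by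
          rw [hcstardef]; linarith [h9]
        have h12 : (E/10)/(1/μ) ≤ E/10 := by
          apply div_le_self hEd hp1
        have h13 : (CA*ν^k)/(1/(1-μ)) ≤ CA*ν^k := div_le_self (by positivity) hq1
        linarith
      have h14 : CA*ν^k ≤ C*ν^k := by
        apply mul_le_mul_of_nonneg_right _ hνk0
        rw [hCdef]; linarith
      linarith
    · -- small ν
      push_neg at hν1
      by_cases hEbig : (1/2)*A^γ ≤ E/10
      · linarith
      · push_neg at hEbig
        have hE5 : E ≤ 5*A^γ := by linarith
        have hν2 : c₇ * A^W ≤ ν := by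
          have h8 : E^θ ≤ (5*A^γ)^θ := Real.rpow_le_rpow hE0 hE5 hθ0.le
          have h9 : ((5:ℝ)*A^γ)^θ = FIVEθ * A^(γ*θ) := by
            rw [Real.mul_rpow (by norm_num) hAγpos.le, ← Real.rpow_mul hA0, hFdef]
          have h10 : A^((1:ℝ)+θ) ≤ (c₆*FIVEθ) * (A^(γ*θ) * ν) := by
            calc A^((1:ℝ)+θ) ≤ c₆*(E^θ*ν) := hA2
              _ ≤ c₆*((FIVEθ*A^(γ*θ))*ν) := by
                  apply mul_le_mul_of_nonneg_left _ hc₆.le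
                  exact mul_le_mul_of_nonneg_right (h8.trans_eq h9) hν0
              _ = (c₆*FIVEθ)*(A^(γ*θ)*ν) := by ring
          have h11 : A^((1:ℝ)+θ) = A^(γ*θ) * A^W := by
            rw [← Real.rpow_add hApos, hWdef]; congr 1; ring
          rw [h11] at h10
          have hAγθ : 0 < A^(γ*θ) := Real.rpow_pos_of_pos hApos _
          have h13 : A^(γ*θ)*A^W ≤ A^(γ*θ)*((c₆*FIVEθ)*ν) := by linarith [h10]
          have h12 : A^W ≤ (c₆*FIVEθ)*ν := le_of_mul_le_mul_left h13 hAγθ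
          rw [hc₇def]
          rw [inv_mul_le_iff₀ (by positivity)]
          linarith [h12]
        have hνk2 : c₇^k * A^(W*(k:ℝ)) ≤ ν^k := by
          have h14 : (c₇*A^W)^k ≤ ν^k :=
            pow_le_pow_left₀ (by positivity) hν2 k
          have h15 : (c₇*A^W)^k = c₇^k * A^(W*(k:ℝ)) := by
            rw [mul_pow, ← Real.rpow_natCast (A^W) k, ← Real.rpow_mul hA0]
          rw [← h15]; exact h14
        have hc12A : A^γ ≤ c₁₂ * A^(W*(k:ℝ)) := by
          have hsplit : A^(W*(k:ℝ)) = A^γ * A^β := by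
            rw [← Real.rpow_add hApos, hβdef]; congr 1; ring
          have hbb : 1 ≤ c₁₂ * A^β := by
            rcases hk' with heq | hγlt
            · have hβz : β = 0 := by rw [hβdef]; linarith [heq]
              rw [hβz, Real.rpow_zero]; linarith
            · by_cases hA1 : 1 ≤ A
              · have h16 : (1:ℝ) ≤ A^β := by
                  have := Real.rpow_le_rpow_of_exponent_le hA1 hβ0
                  simpa using this
                calc (1:ℝ) = 1*1 := by ring
                  _ ≤ c₁₂*A^β := mul_le_mul hc₁₂ h16 zero_le_one (by linarith)
              · push_neg at hA1
                have h16 : A ≤ 5*A^γ := le_trans hAE hE5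
                have h15 : A^((1:ℝ)-γ) ≤ 5 := by
                  have e : A^((1:ℝ)-γ) = A / A^γ := by
                    rw [Real.rpow_sub hApos, Real.rpow_one]
                  rw [e, div_le_iff₀ hAγpos]
                  linarith
                have hγ1' : 0 < γ - 1 := by linarith
                have h17 : A^(-β) ≤ (5:ℝ)^(β/(γ-1)) := by
                  have e : A^(-β) = (A^((1:ℝ)-γ))^(β/(γ-1)) := by
                    rw [← Real.rpow_mul hA0]; congr 1; field_simp; ring
                  rw [e]
                  exact Real.rpow_le_rpow (Real.rpow_nonneg hA0 _) h15 (by positivity)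
                have h19 : A^(-β)*A^β = 1 := by
                  rw [← Real.rpow_add hApos]; simp
                have h20 : A^(-β) ≤ c₁₂ := le_trans h17 (by rw [hc₁₂def]; exact le_max_right _ _)
                have hAβ : 0 < A^β := Real.rpow_pos_of_pos hApos _
                calc (1:ℝ) = A^(-β)*A^β := h19.symm
                  _ ≤ c₁₂*A^β := mul_le_mul_of_nonneg_right h20 hAβ.le
          calc A^γ = A^γ * 1 := by ring
            _ ≤ A^γ * (c₁₂*A^β) := by
                exact mul_le_mul_of_nonneg_left hbb hAγpos.le
            _ = c₁₂*(A^γ*A^β) := by ring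
            _ = c₁₂*A^(W*(k:ℝ)) := by rw [← hsplit]
        have hfin : (1/2)*A^γ ≤ CB * ν^k := by
          have h21 : A^(W*(k:ℝ)) ≤ ν^k / c₇^k := by
            rw [le_div_iff₀ hc₇k]; linarith [hνk2]
          have h22 : A^γ ≤ c₁₂ * (ν^k/c₇^k) := by
            calc A^γ ≤ c₁₂ * A^(W*(k:ℝ)) := hc12A
              _ ≤ c₁₂ * (ν^k/c₇^k) := by
                  exact mul_le_mul_of_nonneg_left h21 (by linarith)
          rw [hCBdef]
          calc (1/2)*A^γ ≤ (1/2)*(c₁₂*(ν^k/c₇^k)) := by linarith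
            _ = (1/2)*c₁₂/c₇^k * ν^k := by ring
        have h23 : CB*ν^k ≤ C*ν^k := by
          apply mul_le_mul_of_nonneg_right _ hνk0
          rw [hCdef]; linarith
        linarith

/-- Coercivity estimate (Fourier-side formulation): for `1/4 < s ≤ 1/2` and
`0 < γ < 1/(1-2s)` there exist `C_γ > 0`, `κ > 0`, `δ > 0` such that for every
`V₀ ∈ H^s(𝕋)` (Fourier coefficients `v`), `Y ∈ H^{s-1/2-δ}(𝕋)` (coefficients `y`) and `Z ∈ ℝ`:
`|∫|V₀|² + 2 Re ∫ V̄₀ Y + Z|^γ ≥ ½‖V₀‖_{L²}^{2γ} − (1/10)‖V₀‖_{H^s}² −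
C_γ ‖Y‖_{H^{s-1/2-δ}}^κ − C_γ |Z|^γ`. -/
theorem coercivity_estimate (s γ : ℝ) (hs1 : 1/4 < s) (hs2 : s ≤ 1/2)
    (hγ0 : 0 < γ) (hγ : γ < 1/(1 - 2*s)) :
    ∃ C > 0, ∃ κ > 0, ∃ δ > 0, ∀ (v y : ℤ → ℂ) (Z : ℝ),
      Summable (fun n : ℤ => jb n ^ (2*s) * ‖v n‖ ^ 2) →
      Summable (fun n : ℤ => jb n ^ (2*(s - 1/2 - δ)) * ‖y n‖ ^ 2) →
      Summable (fun n : ℤ => (starRingEnd ℂ) (v n) * y n) →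
      |(∑' n : ℤ, ‖v n‖ ^ 2) + 2 * (∑' n : ℤ, (starRingEnd ℂ) (v n) * y n).re + Z| ^ γ
        ≥ (1/2) * (∑' n : ℤ, ‖v n‖ ^ 2) ^ γ
          - (1/10) * (∑' n : ℤ, jb n ^ (2*s) * ‖v n‖ ^ 2)
          - C * (∑' n : ℤ, jb n ^ (2*(s - 1/2 - δ)) * ‖y n‖ ^ 2) ^ (κ/2)
          - C * |Z| ^ γ := by
  have hs0 : (0:ℝ) < s := lt_trans (by norm_num) hs1
  have h2s : 0 < 1 - 2*s := by
    rcases lt_or_eq_of_le hs2 with h | h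
    · linarith
    · exfalso; rw [h] at hγ; norm_num at hγ; linarith
  have hγ1 : γ * (1 - 2*s) < 1 := (lt_div_iff₀ h2s).mp hγ
  rcases lt_or_ge γ 1 with hlt | hge
  · -- γ < 1 : trivial bound with κ = 1 (so the y-term is a constant)
    set T : ℝ := (5:ℝ)^(1/(1-γ)) with hTdef
    have hT : 0 < T := Real.rpow_pos_of_pos (by norm_num) _
    have hTγ : (0:ℝ) < (1/2)*T^γ + 1 := by
      have := Real.rpow_pos_of_pos hT γ; linarith
    clear_value T
    refine ⟨(1/2)*T^γ + 1, hTγ, 1, by norm_num, 1, by norm_num, ?_⟩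
    intro v y Z hv hy _
    set A : ℝ := ∑' n : ℤ, ‖v n‖ ^ 2 with hAdef
    set E : ℝ := ∑' n : ℤ, jb n ^ (2*s) * ‖v n‖ ^ 2 with hEdef
    clear_value A E
    have hA0 : 0 ≤ A := by rw [hAdef]; exact tsum_nonneg (fun n => by positivity)
    have hterm : ∀ n : ℤ, ‖v n‖ ^ 2 ≤ jb n ^ (2*s) * ‖v n‖ ^ 2 := by
      intro n
      have h1 : (1:ℝ) ≤ jb n ^ (2*s) := by
        have h2 := Real.rpow_le_rpow_of_exponent_le (one_le_jb (n:ℝ))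
          (by linarith : (0:ℝ) ≤ 2*s)
        simpa using h2
      exact le_mul_of_one_le_left (by positivity) h1
    have hA_sum : Summable (fun n : ℤ => ‖v n‖ ^ 2) :=
      hv.of_nonneg_of_le (fun n => by positivity) hterm
    have hAE : A ≤ E := by
      rw [hAdef, hEdef]; exact Summable.tsum_le_tsum hterm hA_sum hv
    have hkey : (1/2)*A^γ ≤ E/10 + ((1/2)*T^γ + 1) := by
      rcases le_total A T with hAT | hAT
      · have h1 : A^γ ≤ T^γ := Real.rpow_le_rpow hA0 hAT hγ0.le
        have h2 : 0 ≤ E := hA0.trans hAE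
        linarith
      · -- A ≥ T : then ½A^γ ≤ A/10 ≤ E/10
        have hApos : 0 < A := lt_of_lt_of_le hT hAT
        have h1 : T^((1:ℝ)-γ) ≤ A^((1:ℝ)-γ) :=
          Real.rpow_le_rpow hT.le hAT (by linarith)
        have h2 : T^((1:ℝ)-γ) = 5 := by
          rw [hTdef, ← Real.rpow_mul (by norm_num), one_div_mul_cancel
            (by linarith : (1:ℝ)-γ ≠ 0), Real.rpow_one]
        have h3 : 5*A^γ ≤ A := by
          have h4 : A^((1:ℝ)-γ) * A^γ = A := by
            rw [← Real.rpow_add hApos]; norm_num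
          have h5 : 5*A^γ ≤ A^((1:ℝ)-γ)*A^γ := by
            apply mul_le_mul_of_nonneg_right _ (Real.rpow_nonneg hA0 _)
            rw [← h2]; exact h1
          linarith
        have hTγpos : 0 < (1/2)*T^γ + 1 := hTγ
        linarith
    have hX0 : 0 ≤ |A + 2*(∑' n : ℤ, (starRingEnd ℂ) (v n) * y n).re + Z|^γ :=
      Real.rpow_nonneg (abs_nonneg _) _
    have hZ0 : 0 ≤ ((1/2)*T^γ + 1) * |Z|^γ :=
      mul_nonneg hTγ.le (Real.rpow_nonneg (abs_nonneg _) _)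
    rw [ge_iff_le]
    have hpow : ((∑' n : ℤ, jb n ^ (2*(s - 1/2 - (1:ℝ))) * ‖y n‖ ^ 2)) ^ ((1:ℕ)/2) = 1 := by
      norm_num
    rw [hpow]
    linarith
  · -- γ ≥ 1
    set δ : ℝ := min ((2*s - 1/2)/2) ((1 - γ*(1-2*s))/(2*(γ+1))) with hδdef
    have hg : 0 < 1 - γ*(1-2*s) := by linarith
    have hδ : 0 < δ := lt_min (by linarith) (by positivity)
    have hσ0 : 0 < 1/2 + δ - s := by linarith
    have hσs : 1/2 + δ - s < s := by
      have h1 : δ ≤ (2*s-1/2)/2 := min_le_left _ _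
      linarith
    set θ : ℝ := (1/2 + δ - s)/s with hθdef
    have hθ0 : 0 < θ := div_pos hσ0 hs0
    have hθ1 : θ < 1 := (div_lt_one hs0).mpr hσs
    have hθkey : θ * (γ - 1) < 1 := by
      have h2 : δ * (2*(γ+1)) ≤ 1 - γ*(1-2*s) :=
        (le_div_iff₀ (by positivity)).mp (min_le_right _ _)
      rw [hθdef, div_mul_eq_mul_div, div_lt_one hs0]
      nlinarith
    set W : ℝ := 1 + θ - γ*θ with hWdef
    have hW0 : 0 < W := by rw [hWdef]; nlinarith
    have hW1 : W ≤ 1 := by rw [hWdef]; nlinarith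
    set k : ℕ := ⌈γ/W⌉₊ with hkdef
    have hek : γ/W ≤ (k:ℝ) := Nat.le_ceil _
    have he1 : (1:ℝ) ≤ γ/W := by
      rw [le_div_iff₀ hW0]; nlinarith
    have hk1 : 1 ≤ k := by
      rw [hkdef]; exact Nat.one_le_ceil_iff.mpr (by linarith)
    have hk : γ ≤ W * k := by
      have := (div_le_iff₀ hW0).mp hek
      linarith
    have hk' : γ = W * k ∨ 1 < γ := by
      rcases eq_or_lt_of_le hge with heq | hgt
      · left
        have hWone : W = 1 := by rw [hWdef, ← heq]; ring
        have hkone : k = 1 := by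
          rw [hkdef, hWone, ← heq]
          norm_num
        rw [hWone, hkone, ← heq]; norm_num
      · right; exact hgt
    clear_value δ θ W k
    obtain ⟨C, hC, hcomb⟩ := combine_ge_one γ θ hge hθ0 hθ1 hθkey k
      (by rw [← hWdef]; exact hk) (by rw [← hWdef]; exact hk')
    refine ⟨C, hC, 2*k, by omega, δ, hδ, ?_⟩
    intro v y Z hv hy _
    obtain ⟨hAE, hRD⟩ := key_analytic s δ θ hs0 hσ0 hσs hθdef v y hv hy
    have hA0 : 0 ≤ ∑' n : ℤ, ‖v n‖ ^ 2 := tsum_nonneg (fun n => by positivity)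
    have hNY0 : 0 ≤ ∑' n : ℤ, jb n ^ (2*(s - 1/2 - δ)) * ‖y n‖ ^ 2 :=
      tsum_nonneg (fun n => mul_nonneg (Real.rpow_nonneg (jb_pos _).le _) (by positivity))
    have hdiv : 2*k/2 = k := by omega
    rw [ge_iff_le, hdiv]
    have := hcomb (∑' n : ℤ, ‖v n‖ ^ 2) (∑' n : ℤ, jb n ^ (2*s) * ‖v n‖ ^ 2)
      (∑' n : ℤ, jb n ^ (2*(s - 1/2 - δ)) * ‖y n‖ ^ 2)
      ((∑' n : ℤ, (starRingEnd ℂ) (v n) * y n).re) Z hA0 hAE hNY0 hRD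
    linarith
end
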